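/- For any E ∈ R^{d×n}, the minimum of ‖E − dαᵀ‖_F² over unit vectors d ∈ R^d and k-sparse α ∈ R^n equals ‖E‖_F² − max{wᵀEᵀEw : ‖w‖₂ = 1, ‖w‖₀ ≤ k}, provided the maximum of the quadratic form is positive. -/

import Mathlib

/-
Expanding the square, ‖E - u aᵀ‖_F² = ‖E‖_F² - 2 uᵀEa + ‖u‖²‖a‖². For a unit u and a k-sparse a,
Cauchy–Schwarz and homogeneity of the sparse Rayleigh quotient give (uᵀEa)² ≤ ‖Ea‖² ≤ S ‖a‖²,
with S the supremum on the right, so 2 uᵀEa ≤ S + ‖a‖² by AM–GM and every fit error is at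
least ‖E‖_F² - S. Conversely a unit k-sparse w with r = ‖Ew‖² > 0 yields u = Ew / √r and
a = √r w, whose fit error is exactly ‖E‖_F² - r; positivity of S lets these r approach S.
-/

open Matrix BigOperators

noncomputable def frob2 {d n : ℕ} (M : Matrix (Fin d) (Fin n) ℝ) : ℝ :=
  ∑ i, ∑ j, (M i j) ^ 2

noncomputable def enorm {n : ℕ} (v : Fin n → ℝ) : ℝ :=
  Real.sqrt (∑ i, v i ^ 2)

noncomputable def spars {n : ℕ} (v : Fin n → ℝ) : ℕ :=
  Nat.card {i : Fin n // v i ≠ 0}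

lemma spars_smul {n : ℕ} {c : ℝ} (hc : c ≠ 0) (w : Fin n → ℝ) :
    spars (c • w) = spars w :=
  Nat.card_congr <| Equiv.subtypeEquivRight fun j => by simp [hc]

lemma sum_sq_smul {ι : Type*} [Fintype ι] (c : ℝ) (w : ι → ℝ) :
    ∑ j, (c • w) j ^ 2 = c ^ 2 * ∑ j, w j ^ 2 := by
  simp only [Pi.smul_apply, smul_eq_mul, mul_pow, Finset.mul_sum]

lemma dotProduct_transpose_mul_mulVec {m n : Type*} [Fintype m] [Fintype n] (E : Matrix m n ℝ)
    (w : n → ℝ) :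
    w ⬝ᵥ (Eᵀ * E) *ᵥ w = ∑ i, (E *ᵥ w) i ^ 2 := by
  rw [← mulVec_mulVec, dotProduct_mulVec, vecMul_transpose]
  simp only [dotProduct, sq]

lemma sum_sq_mulVec_le {d n : ℕ} (E : Matrix (Fin d) (Fin n) ℝ) (w : Fin n → ℝ) :
    ∑ i, (E *ᵥ w) i ^ 2 ≤ frob2 E * ∑ j, w j ^ 2 := by
  rw [frob2, Finset.sum_mul]
  exact Finset.sum_le_sum fun i _ => Finset.sum_mul_sq_le_sq_mul_sq Finset.univ (E i) w

lemma frob2_sub_vecMulVec {d n : ℕ} (E : Matrix (Fin d) (Fin n) ℝ) (u : Fin d → ℝ)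
    (a : Fin n → ℝ) :
    frob2 (E - vecMulVec u a) =
      frob2 E - 2 * ∑ i, u i * (E *ᵥ a) i + (∑ i, u i ^ 2) * ∑ j, a j ^ 2 := by
  have hterm : ∀ i j, (E - vecMulVec u a) i j ^ 2 =
      E i j ^ 2 - 2 * (u i * (E i j * a j)) + u i ^ 2 * a j ^ 2 := fun i j => by
    rw [Matrix.sub_apply, vecMulVec_apply]; ring
  simp only [frob2, hterm, Finset.sum_add_distrib, Finset.sum_sub_distrib, ← Finset.mul_sum,
    ← Finset.sum_mul, mulVec, dotProduct]

lemma sub_le_frob2_sub_vecMulVec {d n : ℕ} {E : Matrix (Fin d) (Fin n) ℝ} {u : Fin d → ℝ}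
    {a : Fin n → ℝ} {s : ℝ} (hu : ∑ i, u i ^ 2 = 1) (hs : 0 ≤ s)
    (ha : ∑ i, (E *ᵥ a) i ^ 2 ≤ s * ∑ j, a j ^ 2) :
    frob2 E - s ≤ frob2 (E - vecMulVec u a) := by
  have hcs := Finset.sum_mul_sq_le_sq_mul_sq Finset.univ u (E *ᵥ a)
  rw [hu, one_mul] at hcs
  have ht : 0 ≤ ∑ j, a j ^ 2 := by positivity
  rw [frob2_sub_vecMulVec, hu, one_mul]
  nlinarith [sq_nonneg (s - ∑ j, a j ^ 2)]

lemma frob2_sub_vecMulVec_of_unit {d n : ℕ} (E : Matrix (Fin d) (Fin n) ℝ) {w : Fin n → ℝ}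
    (hw : ∑ j, w j ^ 2 = 1) {c : ℝ} (hc : c ^ 2 = ∑ i, (E *ᵥ w) i ^ 2) (hc0 : c ≠ 0) :
    ∑ i, (c⁻¹ • E *ᵥ w) i ^ 2 = 1 ∧
      frob2 (E - vecMulVec (c⁻¹ • E *ᵥ w) (c • w)) = frob2 E - ∑ i, (E *ᵥ w) i ^ 2 := by
  have hcross :
      ∑ i, (c⁻¹ • E *ᵥ w) i * (E *ᵥ (c • w)) i = ∑ i, (E *ᵥ w) i ^ 2 := by
    simp only [mulVec_smul, Pi.smul_apply, smul_eq_mul]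
    exact Finset.sum_congr rfl fun i _ => by field_simp
  have hunit : ∑ i, (c⁻¹ • E *ᵥ w) i ^ 2 = 1 := by
    rw [sum_sq_smul, inv_pow, ← hc, inv_mul_cancel₀ (pow_ne_zero 2 hc0)]
  refine ⟨hunit, ?_⟩
  rw [frob2_sub_vecMulVec, hcross, hunit, sum_sq_smul, hw, hc]
  ring

def sparseQuadFormValues {d n : ℕ} (E : Matrix (Fin d) (Fin n) ℝ) (k : ℕ) : Set ℝ :=
  {r | ∃ w : Fin n → ℝ, (∑ i, w i ^ 2 = 1 ∧ spars w ≤ k) ∧ r = w ⬝ᵥ (Eᵀ * E) *ᵥ w}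

def rankOneSparseFitErrors {d n : ℕ} (E : Matrix (Fin d) (Fin n) ℝ) (k : ℕ) : Set ℝ :=
  {r | ∃ (u : Fin d → ℝ) (a : Fin n → ℝ),
    (∑ i, u i ^ 2 = 1 ∧ spars a ≤ k) ∧ r = frob2 (E - vecMulVec u a)}

lemma bddAbove_sparseQuadFormValues {d n : ℕ} (E : Matrix (Fin d) (Fin n) ℝ) (k : ℕ) :
    BddAbove (sparseQuadFormValues E k) := by
  refine ⟨frob2 E, ?_⟩
  rintro _ ⟨w, ⟨hw, -⟩, rfl⟩
  simpa [dotProduct_transpose_mul_mulVec, hw] using sum_sq_mulVec_le E w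

lemma sum_sq_mulVec_le_csSup_mul {d n k : ℕ} (E : Matrix (Fin d) (Fin n) ℝ) {a : Fin n → ℝ}
    (ha : spars a ≤ k) :
    ∑ i, (E *ᵥ a) i ^ 2 ≤ sSup (sparseQuadFormValues E k) * ∑ j, a j ^ 2 := by
  set t := ∑ j, a j ^ 2
  rcases (show 0 ≤ t by positivity).eq_or_lt with ht | ht
  · have ha0 : a = 0 := funext fun j => by
      simpa using (Finset.sum_eq_zero_iff_of_nonneg fun j _ => sq_nonneg (a j)).mp ht.symm j
    simp [ha0, ← ht]
  set c := √t
  have hc : c ^ 2 = t := Real.sq_sqrt ht.le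
  have hc0 : c⁻¹ ≠ 0 := inv_ne_zero (Real.sqrt_pos.mpr ht).ne'
  have hmem : (∑ i, (E *ᵥ a) i ^ 2) / t ∈ sparseQuadFormValues E k := by
    refine ⟨c⁻¹ • a, ⟨?_, (spars_smul hc0 a).le.trans ha⟩, ?_⟩
    · rw [sum_sq_smul, inv_pow, hc, inv_mul_cancel₀ ht.ne']
    · rw [dotProduct_transpose_mul_mulVec, mulVec_smul, sum_sq_smul, inv_pow, hc,
        inv_mul_eq_div]
  rw [← div_le_iff₀ ht]
  exact le_csSup (bddAbove_sparseQuadFormValues E k) hmem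

lemma csInf_eq_sub_csSup {A B : Set ℝ} {c : ℝ} (hpos : 0 < sSup A)
    (hB : ∀ b ∈ B, c - sSup A ≤ b) (hAB : ∀ r ∈ A, 0 < r → c - r ∈ B) :
    sInf B = c - sSup A := by
  have hne : A.Nonempty := Set.nonempty_iff_ne_empty.mpr fun h => by simp [h] at hpos
  obtain ⟨r₀, hr₀, hr₀pos⟩ := exists_lt_of_lt_csSup hne hpos
  refine IsGLB.csInf_eq ⟨hB, fun x hx => ?_⟩ ⟨_, hAB r₀ hr₀ hr₀pos⟩
  suffices sSup A ≤ c - x by linarith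
  refine csSup_le hne fun r hr => ?_
  rcases le_or_gt r 0 with hr0 | hr0
  · linarith [hx (hAB r₀ hr₀ hr₀pos)]
  · linarith [hx (hAB r hr hr0)]

theorem stmt18_general (d n k : ℕ) (E : Matrix (Fin d) (Fin n) ℝ)
    (hpos : 0 < sSup {r : ℝ | ∃ w : Fin n → ℝ,
        (∑ i, w i ^ 2 = 1 ∧ spars w ≤ k) ∧ r = w ⬝ᵥ (Eᵀ * E).mulVec w}) :
    sInf {r : ℝ | ∃ (u : Fin d → ℝ) (a : Fin n → ℝ),
        (∑ i, u i ^ 2 = 1 ∧ spars a ≤ k) ∧ r = frob2 (E - Matrix.vecMulVec u a)} =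
      frob2 E - sSup {r : ℝ | ∃ w : Fin n → ℝ,
        (∑ i, w i ^ 2 = 1 ∧ spars w ≤ k) ∧ r = w ⬝ᵥ (Eᵀ * E).mulVec w} := by
  change sInf (rankOneSparseFitErrors E k) = frob2 E - sSup (sparseQuadFormValues E k)
  refine csInf_eq_sub_csSup hpos ?_ ?_
  · rintro _ ⟨u, a, ⟨hu, ha⟩, rfl⟩
    exact sub_le_frob2_sub_vecMulVec hu hpos.le (sum_sq_mulVec_le_csSup_mul E ha)
  · rintro _ ⟨w, ⟨hw, hwk⟩, rfl⟩ hr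
    rw [dotProduct_transpose_mul_mulVec] at hr ⊢
    have hc0 : √(∑ i, (E *ᵥ w) i ^ 2) ≠ 0 := (Real.sqrt_pos.mpr hr).ne'
    obtain ⟨hu, hfit⟩ := frob2_sub_vecMulVec_of_unit E hw (Real.sq_sqrt hr.le) hc0
    exact ⟨_, _, ⟨hu, (spars_smul hc0 w).le.trans hwk⟩, hfit.symm⟩

theorem stmt18 (d n k : ℕ) (hk1 : 1 ≤ k) (hkn : k ≤ n) (E : Matrix (Fin d) (Fin n) ℝ)
    (hpos : 0 < sSup {r : ℝ | ∃ w : Fin n → ℝ,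
        (∑ i, w i ^ 2 = 1 ∧ spars w ≤ k) ∧ r = w ⬝ᵥ (Eᵀ * E).mulVec w}) :
    sInf {r : ℝ | ∃ (u : Fin d → ℝ) (a : Fin n → ℝ),
        (∑ i, u i ^ 2 = 1 ∧ spars a ≤ k) ∧ r = frob2 (E - Matrix.vecMulVec u a)} =
      frob2 E - sSup {r : ℝ | ∃ w : Fin n → ℝ,
        (∑ i, w i ^ 2 = 1 ∧ spars w ≤ k) ∧ r = w ⬝ᵥ (Eᵀ * E).mulVec w} :=
  stmt18_general d n k E hpos
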